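/- arXiv:2412.18595 — 2 statements merged into one kernel-verified Lean document; each statement's English description precedes it below -/
import Mathlib

section
/- If G' is obtained from a graph G by adding a parallel copy of an existing edge e, then b(G') ≤ max{b(G), 2}. -/
open scoped Classical

noncomputable section

/-- Helper: quotients of finite types are finite. -/
noncomputable def quotFintype {α : Type} [Fintype α] (r : α → α → Prop) : Fintype (Quot r) :=
  Fintype.ofSurjective (Quot.mk r) fun q => Quot.exists_rep q

/-- A finite multigraph.  Each edge `e` carries an (arbitrarily chosen) ordering of its two
endpoints, `fst e` and `snd e`; a loop is an edge with `fst e = snd e`. -/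
structure Multigraph where
  V : Type
  E : Type
  fintV : Fintype V
  fintE : Fintype E
  fst : E → V
  snd : E → V

attribute [instance] Multigraph.fintV Multigraph.fintE

namespace Multigraph

variable (G : Multigraph)

/-- Incidence of a vertex and an edge, modulo 2 (a loop is incident twice, i.e. 0 mod 2). -/
noncomputable def inc (v : G.V) (e : G.E) : ZMod 2 :=
  (if G.fst e = v then 1 else 0) + (if G.snd e = v then 1 else 0)

/-- The cycle space of `G` over `F_2`: characteristic vectors of edge sets in which every
vertex has even degree (i.e. Eulerian subgraphs), with addition = symmetric difference. -/
noncomputable def cycleSpace : Submodule (ZMod 2) (G.E → ZMod 2) where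
  carrier := {x | ∀ v : G.V, ∑ e : G.E, G.inc v e * x e = 0}
  zero_mem' := by intro v; simp
  add_mem' := by
    intro a b ha hb v
    have h : ∀ e : G.E, G.inc v e * (a + b) e = G.inc v e * a e + G.inc v e * b e := by
      intro e
      show G.inc v e * (a e + b e) = G.inc v e * a e + G.inc v e * b e
      ring
    rw [Finset.sum_congr rfl fun e _ => h e, Finset.sum_add_distrib, ha v, hb v, add_zero]
  smul_mem' := by
    intro c x hx v
    have h : ∀ e : G.E, G.inc v e * (c • x) e = c * (G.inc v e * x e) := by
      intro e
      show G.inc v e * (c * x e) = c * (G.inc v e * x e)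
      ring
    rw [Finset.sum_congr rfl fun e _ => h e, ← Finset.mul_sum, hx v, mul_zero]

/-- The charge of an edge `e` with respect to a collection `B` of (characteristic vectors of)
subgraphs: the number of members of `B` containing `e`. -/
noncomputable def charge (B : Finset (G.E → ZMod 2)) (e : G.E) : ℕ :=
  (B.filter fun x => x e ≠ 0).card

/-- `B` is a basis of the cycle space of `G`. -/
def IsCycleBasis (B : Finset (G.E → ZMod 2)) : Prop :=
  (∀ x ∈ B, x ∈ G.cycleSpace) ∧
    LinearIndependent (ZMod 2) (fun x : B => (x : G.E → ZMod 2)) ∧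
    Submodule.span (ZMod 2) (B : Set (G.E → ZMod 2)) = G.cycleSpace

/-- `B` is a `k`-basis: a basis of the cycle space in which every edge has charge at most `k`. -/
def IsKBasis (k : ℕ) (B : Finset (G.E → ZMod 2)) : Prop :=
  G.IsCycleBasis B ∧ ∀ e : G.E, G.charge B e ≤ k

/-- The basis number of `G`: the least `k` such that `G` has a `k`-basis. -/
noncomputable def basisNum : ℕ := sInf {k | ∃ B, G.IsKBasis k B}

/-- Adjacency of two vertices. -/
def Adj (a b : G.V) : Prop :=
  ∃ e : G.E, (G.fst e = a ∧ G.snd e = b) ∨ (G.fst e = b ∧ G.snd e = a)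

/-- Connectivity. -/
def Connected : Prop :=
  Nonempty G.V ∧ ∀ a b : G.V, Relation.ReflTransGen G.Adj a b

/-- Degree of a vertex (a loop counts twice). -/
noncomputable def degree (v : G.V) : ℕ :=
  ∑ e : G.E, ((if G.fst e = v then 1 else 0) + (if G.snd e = v then 1 else 0))

/-- The subgraph with the same vertex set and edge set restricted to `S`. -/
noncomputable def edgeRestrict (S : Set G.E) : Multigraph where
  V := G.V
  E := S
  fintV := G.fintV
  fintE := (Set.toFinite S).fintype
  fst := fun e => G.fst e.1
  snd := fun e => G.snd e.1

/-- Deletion of a vertex (and all edges incident with it). -/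
noncomputable def deleteVertex (v : G.V) : Multigraph where
  V := {u : G.V // u ≠ v}
  E := {e : G.E // G.fst e ≠ v ∧ G.snd e ≠ v}
  fintV := by classical exact inferInstance
  fintE := by classical exact inferInstance
  fst := fun e => ⟨G.fst e.1, e.2.1⟩
  snd := fun e => ⟨G.snd e.1, e.2.2⟩

/-- `G` is 2-connected: at least 3 vertices, connected, and no cutvertex. -/
def TwoConnected : Prop :=
  G.Connected ∧ 3 ≤ Nat.card G.V ∧ ∀ v : G.V, (G.deleteVertex v).Connected

/-- A cycle of length `n` in `G`: `n` distinct vertices and `n` distinct edges, with edge `i`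
joining vertex `i` to vertex `i+1` (cyclically). -/
def IsCycleOn (n : ℕ) (vs : Fin n → G.V) (es : Fin n → G.E) : Prop :=
  Function.Injective vs ∧ Function.Injective es ∧
    ∀ i : Fin n,
      (G.fst (es i) = vs i ∧ G.snd (es i) = vs (finRotate n i)) ∨
      (G.fst (es i) = vs (finRotate n i) ∧ G.snd (es i) = vs i)

/-- A path with `n` edges, given by its (distinct) vertices and its edges. -/
def IsPathOn (n : ℕ) (vs : Fin (n + 1) → G.V) (es : Fin n → G.E) : Prop :=
  Function.Injective vs ∧
    ∀ i : Fin n,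
      (G.fst (es i) = vs i.castSucc ∧ G.snd (es i) = vs i.succ) ∨
      (G.fst (es i) = vs i.succ ∧ G.snd (es i) = vs i.castSucc)

/-- `p` is the characteristic vector of (the edge set of) a path from `s` to `t`. -/
def IsPathVec (s t : G.V) (p : G.E → ZMod 2) : Prop :=
  ∃ (n : ℕ) (vs : Fin (n + 1) → G.V) (es : Fin n → G.E),
    G.IsPathOn n vs es ∧ vs 0 = s ∧ vs (Fin.last n) = t ∧
      ∀ f : G.E, p f ≠ 0 ↔ ∃ i, es i = f

/-- Two edges lie in a common block: they are equal, or they lie on a common cycle. -/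
def BlockRel (e f : G.E) : Prop :=
  e = f ∨ ∃ (n : ℕ) (vs : Fin n → G.V) (es : Fin n → G.E),
    1 ≤ n ∧ G.IsCycleOn n vs es ∧ (∃ i, es i = e) ∧ (∃ j, es j = f)

/-- `T` is a spanning tree of `G` (as an edge set): the spanning subgraph with edge set `T`
is connected and has no cycles. -/
def IsSpanningTree (T : Set G.E) : Prop :=
  (G.edgeRestrict T).Connected ∧
    ∀ (n : ℕ) (vs : Fin n → (G.edgeRestrict T).V) (es : Fin n → (G.edgeRestrict T).E),
      (G.edgeRestrict T).IsCycleOn n vs es → n = 0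

/-- Contraction of the edge `e`: identify its two endpoints and delete `e`. -/
noncomputable def contract (e : G.E) : Multigraph where
  V := Quot (fun a b : G.V => a = G.fst e ∧ b = G.snd e)
  E := {f : G.E // f ≠ e}
  fintV := quotFintype _
  fintE := by classical exact inferInstance
  fst := fun f => Quot.mk _ (G.fst f.1)
  snd := fun f => Quot.mk _ (G.snd f.1)

/-- Addition of a (possibly parallel) edge joining `u` and `v`. -/
noncomputable def addEdge (u v : G.V) : Multigraph where
  V := G.V
  E := Option G.E
  fintV := G.fintV
  fintE := inferInstance
  fst := fun o => o.elim u G.fst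
  snd := fun o => o.elim v G.snd

/-- Subdivision of the edge `e`: delete `e` and add a new vertex (`none`) joined to both
endpoints of `e`. -/
noncomputable def subdivide (e : G.E) : Multigraph where
  V := Option G.V
  E := {f : G.E // f ≠ e} ⊕ Bool
  fintV := inferInstance
  fintE := by classical exact inferInstance
  fst := Sum.elim (fun f => some (G.fst f.1))
    (fun b => cond b (some (G.fst e)) (some (G.snd e)))
  snd := Sum.elim (fun f => some (G.snd f.1)) (fun _ => none)

/-- Replacement of the edge `e` of `G` by the graph `H` with terminals `s`, `t`:
delete `e`, take the disjoint union with `H`, and identify the endpoints of `e`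
with the terminals. -/
noncomputable def replaceEdge (e : G.E) (H : Multigraph) (s t : H.V) : Multigraph where
  V := Quot (fun a b : G.V ⊕ H.V =>
        (a = Sum.inl (G.fst e) ∧ b = Sum.inr s) ∨ (a = Sum.inl (G.snd e) ∧ b = Sum.inr t))
  E := {f : G.E // f ≠ e} ⊕ H.E
  fintV := quotFintype _
  fintE := by classical exact inferInstance
  fst := Sum.elim (fun f => Quot.mk _ (Sum.inl (G.fst f.1)))
    (fun f => Quot.mk _ (Sum.inr (H.fst f)))
  snd := Sum.elim (fun f => Quot.mk _ (Sum.inl (G.snd f.1)))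
    (fun f => Quot.mk _ (Sum.inr (H.snd f)))

/-! ### Combinatorial embeddings (rotation systems) and planarity -/

/-- Darts: each edge gives two darts. -/
def Dart : Type := G.E × Bool

noncomputable instance : Fintype G.Dart := inferInstanceAs (Fintype (G.E × Bool))

/-- The vertex at which a dart is based. -/
def dartVertex (d : G.Dart) : G.V := cond d.2 (G.fst d.1) (G.snd d.1)

/-- The involution exchanging the two darts of each edge. -/
def dartFlip : Equiv.Perm G.Dart where
  toFun d := (d.1, !d.2)
  invFun d := (d.1, !d.2)
  left_inv := fun d => by cases d; simp <;> rfl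
  right_inv := fun d => by cases d; simp <;> rfl

/-- `σ` is a rotation system: its orbits are exactly the sets of darts based at a
common vertex. -/
def IsRotation (σ : Equiv.Perm G.Dart) : Prop :=
  ∀ d d' : G.Dart, σ.SameCycle d d' ↔ G.dartVertex d = G.dartVertex d'

/-- The face permutation of a rotation system. -/
def facePerm (σ : Equiv.Perm G.Dart) : Equiv.Perm G.Dart := G.dartFlip.trans σ

/-- The faces of the embedding given by `σ`: orbits of the face permutation. -/
def Faces (σ : Equiv.Perm G.Dart) : Type := Quot (G.facePerm σ).SameCycle

/-- The face containing a given dart. -/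
def faceOf (σ : Equiv.Perm G.Dart) (d : G.Dart) : G.Faces σ := Quot.mk _ d

noncomputable def numFaces (σ : Equiv.Perm G.Dart) : ℕ := Nat.card (G.Faces σ)

noncomputable def numComponents : ℕ := Nat.card (Quot G.Adj)

/-- The number of connected components containing at least one edge. -/
noncomputable def numEdgedComponents : ℕ :=
  Nat.card {c : Quot G.Adj // ∃ e : G.E, Quot.mk G.Adj (G.fst e) = c}

/-- `σ` is a planar (genus zero) embedding, by Euler's formula
(componentwise `V - E + F = 2`, where components without edges contribute one global face). -/
def IsPlanarRotation (σ : Equiv.Perm G.Dart) : Prop :=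
  G.IsRotation σ ∧
    G.numFaces σ + Nat.card G.V = Nat.card G.E + G.numComponents + G.numEdgedComponents

/-- `G` is planar: it admits a genus-zero combinatorial embedding. -/
def IsPlanar : Prop := ∃ σ : Equiv.Perm G.Dart, G.IsPlanarRotation σ

/-- The boundary of a face, as an element of `F_2^E`: the edges having exactly one of
their two darts on the face. -/
noncomputable def faceBoundary (σ : Equiv.Perm G.Dart) (c : G.Faces σ) : G.E → ZMod 2 :=
  fun e => ∑ b : Bool, if G.faceOf σ (e, b) = c then 1 else 0

/-- The vertex `v` lies on the face `c`. -/
def VertexOnFace (σ : Equiv.Perm G.Dart) (v : G.V) (c : G.Faces σ) : Prop :=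
  ∃ d : G.Dart, G.faceOf σ d = c ∧ G.dartVertex d = v

/-- The edge `e` lies on the face `c`. -/
def EdgeOnFace (σ : Equiv.Perm G.Dart) (e : G.E) (c : G.Faces σ) : Prop :=
  ∃ b : Bool, G.faceOf σ (e, b) = c

end Multigraph

/-!
Write `e'` for the parallel copy of `e`. The cycle space of `G'` is spanned by the cycle space
of `G` (extended by zero on `e'`) together with the digon `{e, e'}`, so adding the digon to a
basis `B` of `G` gives a basis of `G'`. This raises the charge of `e` by one, which is harmless
when no member of `B` contains `e`. Otherwise pick `x ∈ B` through `e` and also replace `x` by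
`x + {e, e'}`, i.e. reroute `x` through `e'`: the span and the size are unchanged, `e` keeps its
charge, and `e'` lies in exactly two basis cycles.
-/

theorem Submodule.span_insert_add_of_mem {R M : Type*} [Ring R] [AddCommGroup M] [Module R M]
    {a c : M} {s : Set M} (hc : c ∈ Submodule.span R s) :
    Submodule.span R (insert (a + c) s) = Submodule.span R (insert a s) := by
  simp only [Submodule.span_insert]
  apply le_antisymm <;>
    refine sup_le (Submodule.span_singleton_le_iff_mem _ _ |>.mpr ?_) le_sup_right
  · exact Submodule.add_mem_sup (Submodule.mem_span_singleton_self a) hc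
  · simpa using Submodule.sub_mem_sup (Submodule.mem_span_singleton_self (a + c)) hc

theorem LinearIndepOn.of_span_eq_of_card_le {K M : Type*} [DivisionRing K] [AddCommGroup M]
    [Module K M] {s t : Finset M} (ht : LinearIndepOn K id (t : Set M))
    (hspan : Submodule.span K (s : Set M) = Submodule.span K (t : Set M))
    (hcard : s.card ≤ t.card) : LinearIndepOn K id (s : Set M) := by
  have hrange : Set.range (fun x : (s : Set M) => id (x : M)) = s := by simp
  rw [LinearIndepOn, linearIndependent_iff_card_le_finrank_span, Set.finrank, hrange, hspan,
    finrank_span_finset_eq_card ht]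
  simpa using hcard

namespace Multigraph

variable {G : Multigraph}

theorem exists_isKBasis_basisNum (G : Multigraph) : ∃ B, G.IsKBasis G.basisNum B := by
  obtain ⟨b, hb_sub, hb_span, hb_li⟩ :=
    exists_linearIndependent (ZMod 2) (G.cycleSpace : Set (G.E → ZMod 2))
  have hb : b.Finite := Set.toFinite b
  have hB : G.IsKBasis hb.toFinset.card hb.toFinset := by
    refine ⟨⟨fun x hx => hb_sub (hb.mem_toFinset.mp hx),
      LinearIndepOn.mono (v := id) hb_li hb.coe_toFinset.le, ?_⟩, fun f => Finset.card_filter_le _ _⟩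
    rw [hb.coe_toFinset, hb_span, Submodule.span_eq]
  exact Nat.sInf_mem (s := {k | ∃ B, G.IsKBasis k B}) ⟨_, _, hB⟩

theorem IsKBasis.basisNum_le {k : ℕ} {B : Finset (G.E → ZMod 2)} (h : G.IsKBasis k B) :
    G.basisNum ≤ k :=
  Nat.sInf_le ⟨B, h⟩

theorem IsKBasis.mono {k l : ℕ} {B : Finset (G.E → ZMod 2)} (h : G.IsKBasis k B) (hkl : k ≤ l) :
    G.IsKBasis l B :=
  ⟨h.1, fun f => (h.2 f).trans hkl⟩

theorem IsCycleBasis.of_linearIndepOn_of_span_eq {B : Finset (G.E → ZMod 2)}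
    (hli : LinearIndepOn (ZMod 2) id (B : Set (G.E → ZMod 2)))
    (hspan : Submodule.span (ZMod 2) (B : Set (G.E → ZMod 2)) = G.cycleSpace) :
    G.IsCycleBasis B :=
  ⟨fun _ hx => hspan ▸ Submodule.subset_span hx, hli, hspan⟩

theorem IsCycleBasis.of_span_eq_of_card_le {B B' : Finset (G.E → ZMod 2)} (hB : G.IsCycleBasis B)
    (hspan : Submodule.span (ZMod 2) (B' : Set (G.E → ZMod 2)) =
      Submodule.span (ZMod 2) (B : Set (G.E → ZMod 2)))
    (hcard : B'.card ≤ B.card) : G.IsCycleBasis B' :=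
  .of_linearIndepOn_of_span_eq (.of_span_eq_of_card_le hB.2.1 hspan hcard) (hspan.trans hB.2.2)

theorem charge_insert_le (B : Finset (G.E → ZMod 2)) (x : G.E → ZMod 2) (f : G.E) :
    G.charge (insert x B) f ≤ G.charge B f + if x f = 0 then 0 else 1 := by
  unfold charge
  rw [Finset.filter_insert]
  split_ifs <;> simp_all [Finset.card_insert_le]

theorem charge_erase_add {B : Finset (G.E → ZMod 2)} {x : G.E → ZMod 2} (hx : x ∈ B) (f : G.E) :
    G.charge (B.erase x) f + (if x f = 0 then 0 else 1) = G.charge B f := by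
  unfold charge
  rw [Finset.filter_erase]
  split_ifs with h
  · rw [Finset.erase_eq_of_notMem (by simp [h]), add_zero]
  · exact Finset.card_erase_add_one (Finset.mem_filter.mpr ⟨hx, h⟩)

section AddEdge

variable {u v : G.V}

def extendByZero (u v : G.V) : (G.E → ZMod 2) →ₗ[ZMod 2] ((G.addEdge u v).E → ZMod 2) where
  toFun x o := o.elim 0 x
  map_add' _ _ := by funext o; cases o <;> rfl
  map_smul' _ _ := by funext o; cases o <;> rfl

@[simp] theorem extendByZero_none (x : G.E → ZMod 2) : G.extendByZero u v x none = 0 := rfl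

@[simp] theorem extendByZero_some (x : G.E → ZMod 2) (f : G.E) :
    G.extendByZero u v x (some f) = x f := rfl

theorem extendByZero_injective : Function.Injective (G.extendByZero u v) :=
  fun _ _ h => funext fun f => congrFun h (some f)

theorem extendByZero_restrict {z : (G.addEdge u v).E → ZMod 2} (hz : z none = 0) :
    G.extendByZero u v (fun f => z (some f)) = z := by
  funext o; cases o <;> simp [hz]

theorem sum_inc_mul_addEdge (w : G.V) (z : (G.addEdge u v).E → ZMod 2) :
    ∑ o, (G.addEdge u v).inc w o * z o =
      (G.addEdge u v).inc w none * z none + ∑ f, G.inc w f * z (some f) :=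
  Fintype.sum_option _

theorem mem_cycleSpace_addEdge_iff (z : (G.addEdge u v).E → ZMod 2) :
    z ∈ (G.addEdge u v).cycleSpace ↔
      ∀ w : G.V, (G.addEdge u v).inc w none * z none + ∑ f, G.inc w f * z (some f) = 0 :=
  forall_congr' fun w => by rw [sum_inc_mul_addEdge (G := G) (u := u) (v := v) w z]

theorem extendByZero_mem_cycleSpace_iff {x : G.E → ZMod 2} :
    G.extendByZero u v x ∈ (G.addEdge u v).cycleSpace ↔ x ∈ G.cycleSpace := by
  simp only [mem_cycleSpace_addEdge_iff, extendByZero_none, extendByZero_some, mul_zero, zero_add]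
  rfl

theorem charge_image_extendByZero (B : Finset (G.E → ZMod 2)) (f : G.E) :
    (G.addEdge u v).charge (B.image (G.extendByZero u v)) (some f) = G.charge B f := by
  unfold charge
  rw [Finset.filter_image, Finset.card_image_of_injective _ extendByZero_injective]
  rfl

theorem charge_image_extendByZero_none (B : Finset (G.E → ZMod 2)) :
    (G.addEdge u v).charge (B.image (G.extendByZero u v)) none = 0 := by
  simp [charge]

end AddEdge

abbrev addParallel (G : Multigraph) (e : G.E) : Multigraph := G.addEdge (G.fst e) (G.snd e)

section Parallel

variable {e : G.E}

variable (G e) in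
/-- The 2-cycle formed by `e` and its parallel copy `none`. -/
def digon : (G.addParallel e).E → ZMod 2 := fun o => o.elim 1 (Pi.single e 1)

@[simp] theorem digon_none : G.digon e none = 1 := rfl

@[simp] theorem digon_some (f : G.E) :
    G.digon e (some f) = (Pi.single e 1 : G.E → ZMod 2) f :=
  rfl

@[simp] theorem inc_addParallel_none (w : G.V) : (G.addParallel e).inc w none = G.inc w e := rfl

theorem digon_mem_cycleSpace : G.digon e ∈ (G.addParallel e).cycleSpace := by
  rw [mem_cycleSpace_addEdge_iff]
  intro w
  simpa [Pi.single_apply] using CharTwo.add_self_eq_zero (G.inc w e)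

theorem cycleSpace_addParallel :
    (G.addParallel e).cycleSpace =
      (ZMod 2) ∙ G.digon e ⊔ G.cycleSpace.map (G.extendByZero (G.fst e) (G.snd e)) := by
  refine le_antisymm (fun z hz => ?_) (sup_le ?_ ?_)
  · set y := z - z none • G.digon e
    have hy0 : y none = 0 := by
      show z none - z none * G.digon e none = 0
      simp
    have hy : y ∈ (G.addParallel e).cycleSpace :=
      sub_mem hz (Submodule.smul_mem _ _ digon_mem_cycleSpace)
    rw [← extendByZero_restrict hy0, extendByZero_mem_cycleSpace_iff] at hy
    refine Submodule.mem_sup.mpr ⟨_, Submodule.smul_mem _ (z none)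
      (Submodule.mem_span_singleton_self _), _, ⟨_, hy, extendByZero_restrict hy0⟩, ?_⟩
    simp [y]
  · exact (Submodule.span_singleton_le_iff_mem _ _).mpr digon_mem_cycleSpace
  · exact Submodule.map_le_iff_le_comap.mpr fun x hx => extendByZero_mem_cycleSpace_iff.mpr hx

theorem digon_notMem_span_image_extendByZero (s : Set (G.E → ZMod 2)) :
    G.digon e ∉ Submodule.span (ZMod 2) (G.extendByZero (G.fst e) (G.snd e) '' s) := by
  intro h
  have hker : Submodule.span (ZMod 2) (G.extendByZero (G.fst e) (G.snd e) '' s) ≤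
      LinearMap.ker (LinearMap.proj (R := ZMod 2) (φ := fun _ : (G.addParallel e).E => ZMod 2)
        none) :=
    Submodule.span_le.mpr fun _ ⟨x, _, hx⟩ => hx ▸ extendByZero_none (u := G.fst e) (v := G.snd e) x
  exact one_ne_zero (LinearMap.mem_ker.mp (hker h))

theorem IsCycleBasis.addParallel {B : Finset (G.E → ZMod 2)} (hB : G.IsCycleBasis B) :
    (G.addParallel e).IsCycleBasis
      (insert (G.digon e) (B.image (G.extendByZero (G.fst e) (G.snd e)))) := by
  obtain ⟨-, hli, hspan⟩ := hB
  have hdigon := digon_notMem_span_image_extendByZero (e := e) (B : Set (G.E → ZMod 2))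
  refine .of_linearIndepOn_of_span_eq ?_ ?_ <;> rw [Finset.coe_insert, Finset.coe_image]
  · exact (linearIndepOn_id_insert fun h => hdigon (Submodule.subset_span h)).mpr
      ⟨LinearIndepOn.id_imageₛ hli extendByZero_injective.injOn, hdigon⟩
  · rw [Submodule.span_insert, Submodule.span_image, hspan, cycleSpace_addParallel]

theorem IsCycleBasis.addParallel_reroute {B : Finset (G.E → ZMod 2)} (hB : G.IsCycleBasis B)
    {x : G.E → ZMod 2} (hx : x ∈ B) :
    (G.addParallel e).IsCycleBasis
      (insert (G.extendByZero _ _ x + G.digon e)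
        (insert (G.digon e) ((B.erase x).image (G.extendByZero (G.fst e) (G.snd e))))) := by
  have hdigon : G.digon e ∉ B.image (G.extendByZero (G.fst e) (G.snd e)) := fun h =>
    digon_notMem_span_image_extendByZero (e := e) B
      (Submodule.subset_span (by simpa using h))
  refine hB.addParallel.of_span_eq_of_card_le ?_ ?_
  · have himage : B.image (G.extendByZero (G.fst e) (G.snd e)) =
        insert (G.extendByZero _ _ x) ((B.erase x).image (G.extendByZero (G.fst e) (G.snd e))) := by
      rw [← Finset.image_insert, Finset.insert_erase hx]
    rw [Finset.coe_insert, Submodule.span_insert_add_of_mem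
      (Submodule.subset_span (Finset.mem_coe.mpr (Finset.mem_insert_self _ _))), himage,
      Finset.insert_comm]
    simp only [Finset.coe_insert]
  · set S := (B.erase x).image (G.extendByZero (G.fst e) (G.snd e))
    calc (insert (G.extendByZero _ _ x + G.digon e) (insert (G.digon e) S)).card
        ≤ S.card + 1 + 1 := (Finset.card_insert_le _ _).trans (by simp [Finset.card_insert_le])
      _ ≤ (B.erase x).card + 1 + 1 := by simpa using Finset.card_image_le
      _ = (insert (G.digon e) (B.image (G.extendByZero (G.fst e) (G.snd e)))).card := by
        rw [Finset.card_insert_of_notMem hdigon,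
          Finset.card_image_of_injective _ extendByZero_injective, Finset.card_erase_add_one hx]

theorem IsKBasis.addParallel {k : ℕ} {B : Finset (G.E → ZMod 2)} (hB : G.IsKBasis k B)
    (he : G.charge B e = 0) :
    (G.addParallel e).IsKBasis (max k 1)
      (insert (G.digon e) (B.image (G.extendByZero (G.fst e) (G.snd e)))) := by
  refine ⟨hB.1.addParallel, fun o => (charge_insert_le _ _ o).trans ?_⟩
  rcases o with _ | f
  · simp [charge_image_extendByZero_none]
  · rw [charge_image_extendByZero]
    rcases eq_or_ne f e with rfl | hf
    · simp [he]
    · simpa [hf] using (hB.2 f).trans (le_max_left k 1)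

@[simp] theorem extendByZero_add_digon_none (x : G.E → ZMod 2) :
    (G.extendByZero (G.fst e) (G.snd e) x + G.digon e) none = 1 :=
  zero_add 1

@[simp] theorem extendByZero_add_digon_some (x : G.E → ZMod 2) (f : G.E) :
    (G.extendByZero (G.fst e) (G.snd e) x + G.digon e) (some f) =
      x f + (Pi.single e 1 : G.E → ZMod 2) f :=
  rfl

theorem IsKBasis.addParallel_reroute {k : ℕ} {B : Finset (G.E → ZMod 2)} (hB : G.IsKBasis k B)
    {x : G.E → ZMod 2} (hx : x ∈ B) (hxe : x e ≠ 0) :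
    (G.addParallel e).IsKBasis (max k 2)
      (insert (G.extendByZero _ _ x + G.digon e)
        (insert (G.digon e) ((B.erase x).image (G.extendByZero (G.fst e) (G.snd e))))) := by
  refine ⟨hB.1.addParallel_reroute hx, fun o =>
    (charge_insert_le _ _ o).trans ((Nat.add_le_add_right (charge_insert_le _ _ o) _).trans ?_)⟩
  rcases o with _ | f
  · simp [charge_image_extendByZero_none]
  · have hB' := charge_erase_add hx f
    have hk := hB.2 f
    rw [charge_image_extendByZero]
    rcases eq_or_ne f e with rfl | hf
    · have hx1 : x f = 1 := Fin.eq_one_of_ne_zero _ hxe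
      simp [hx1, CharTwo.add_self_eq_zero] at hB' ⊢
      omega
    · simp [hf]
      omega

end Parallel

end Multigraph

/-- If `G'` is obtained from a graph `G` by adding a parallel copy of an
existing edge `e`, then `b(G') ≤ max {b(G), 2}`. -/
theorem basisNum_parallel_le (G : Multigraph) (e : G.E) :
    (G.addEdge (G.fst e) (G.snd e)).basisNum ≤ max G.basisNum 2 := by
  obtain ⟨B, hB⟩ := G.exists_isKBasis_basisNum
  by_cases he : G.charge B e = 0
  · exact ((hB.addParallel he).mono (max_le_max_left _ one_le_two)).basisNum_le
  · obtain ⟨x, hx⟩ := Finset.card_ne_zero.mp he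
    rw [Finset.mem_filter] at hx
    exact (hB.addParallel_reroute hx.1 hx.2).basisNum_le
end
end

section
/- If a 3-regular graph G has a 3-basis of its cycle space, then G has girth at most 7. -/
open scoped Classical

noncomputable section

/-!
A loop is a cycle of length 1, so let `G` be loopless and suppose every cycle has length at
least 8. Every nonzero element of the cycle space contains a cycle, so each member of `B` has at
least 8 edges. At a vertex `v` each member of `B` uses an even number of the three edges at `v`,
and these numbers add up to at most `3 · 3 = 9`, hence to at most 8. Summing over the `n`
vertices, the members of `B` have at most `4n` edges in total, so `8 |B| ≤ 4n`; but
`|B| = dim Z(G) ≥ m - n + 1 = n/2 + 1`.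
-/
namespace Multigraph

open Finset Module

variable {G : Multigraph}

section Incidence

variable (G)

def incCount (v : G.V) (e : G.E) : ℕ :=
  (if G.fst e = v then 1 else 0) + (if G.snd e = v then 1 else 0)

lemma degree_eq_sum_incCount (v : G.V) : G.degree v = ∑ e, G.incCount v e := rfl

lemma inc_eq_incCount (v : G.V) (e : G.E) : G.inc v e = G.incCount v e := by
  simp [inc, incCount]

lemma sum_incCount (e : G.E) : ∑ v, G.incCount v e = 2 := by
  simp [incCount, sum_add_distrib]

lemma sum_degree : ∑ v, G.degree v = 2 * Fintype.card G.E := by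
  simp_rw [degree_eq_sum_incCount]
  rw [sum_comm]
  simp [sum_incCount, mul_comm]

def Joins (e : G.E) (u w : G.V) : Prop :=
  (G.fst e = u ∧ G.snd e = w) ∨ (G.fst e = w ∧ G.snd e = u)

end Incidence

variable {e f : G.E} {u w u' w' : G.V}

lemma Joins.symm (h : G.Joins e u w) : G.Joins e w u := Or.symm h

lemma Joins.eq_or_eq (h : G.Joins e u w) (h' : G.Joins e u' w') : u' = u ∨ u' = w := by
  unfold Joins at h h'
  rcases h with ⟨rfl, rfl⟩ | ⟨rfl, rfl⟩ <;> rcases h' with ⟨h1, h2⟩ | ⟨h1, h2⟩ <;> tauto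

lemma Joins.incCount_eq_one (hloop : G.fst e ≠ G.snd e) (h : G.Joins e u w) :
    G.incCount u e = 1 := by
  unfold Joins at h
  rcases h with ⟨rfl, rfl⟩ | ⟨rfl, rfl⟩ <;> simp [incCount, hloop, hloop.symm]

lemma exists_joins_of_incCount_ne_zero (h : G.incCount u e ≠ 0) : ∃ w, G.Joins e u w := by
  unfold incCount at h
  by_cases h1 : G.fst e = u
  · exact ⟨_, .inl ⟨h1, rfl⟩⟩
  · by_cases h2 : G.snd e = u
    · exact ⟨_, .inr ⟨rfl, h2⟩⟩
    · simp [h1, h2] at h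

lemma isCycleOn_loop (e : G.E) (h : G.fst e = G.snd e) :
    G.IsCycleOn 1 (fun _ => G.fst e) (fun _ => e) :=
  ⟨fun a b _ => Subsingleton.elim a b, fun a b _ => Subsingleton.elim a b,
    fun _ => .inl ⟨rfl, h.symm⟩⟩

section SupportDegree

variable (G)

def supportDegree (x : G.E → ZMod 2) (v : G.V) : ℕ :=
  ∑ e with x e ≠ 0, G.incCount v e

lemma sum_supportDegree (x : G.E → ZMod 2) :
    ∑ v, G.supportDegree x v = 2 * #{e | x e ≠ 0} := by
  simp only [supportDegree]
  rw [sum_comm]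
  simp [sum_incCount, mul_comm]

variable {G}

lemma even_supportDegree {x : G.E → ZMod 2} (hx : x ∈ G.cycleSpace) (v : G.V) :
    Even (G.supportDegree x v) := by
  have hbool : ∀ a : ZMod 2, a = if a ≠ 0 then 1 else 0 := by decide
  rw [← ZMod.natCast_eq_zero_iff_even, ← hx v, supportDegree]
  push_cast
  rw [sum_filter]
  refine sum_congr rfl fun e _ => ?_
  rw [inc_eq_incCount]
  conv_rhs => rw [hbool (x e)]
  split_ifs <;> simp

lemma sum_supportDegree_le {B : Finset (G.E → ZMod 2)} {k : ℕ}
    (hcharge : ∀ e, G.charge B e ≤ k) (v : G.V) :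
    ∑ x ∈ B, G.supportDegree x v ≤ k * G.degree v := by
  calc ∑ x ∈ B, G.supportDegree x v
      = ∑ e, G.charge B e * G.incCount v e := by
        simp only [supportDegree, charge, sum_filter, card_eq_sum_ones, sum_mul, ite_mul, one_mul,
          zero_mul]
        rw [sum_comm]
    _ ≤ ∑ e, k * G.incCount v e := by gcongr with e; exact hcharge e
    _ = k * G.degree v := by rw [← mul_sum, degree_eq_sum_incCount]

lemma sum_card_support_le_of_cubic {B : Finset (G.E → ZMod 2)}
    (hcycle : ∀ x ∈ B, x ∈ G.cycleSpace) (hcharge : ∀ e, G.charge B e ≤ 3)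
    (hreg : ∀ v, G.degree v = 3) :
    ∑ x ∈ B, #{e | x e ≠ 0} ≤ 4 * Fintype.card G.V := by
  have hvertex : ∀ v, ∑ x ∈ B, G.supportDegree x v ≤ 8 := by
    intro v
    have hle := sum_supportDegree_le hcharge v
    have heven : Even (∑ x ∈ B, G.supportDegree x v) :=
      even_sum _ fun x hx => even_supportDegree (hcycle x hx) v
    rw [hreg] at hle
    obtain ⟨r, hr⟩ := heven
    omega
  have htotal : 2 * ∑ x ∈ B, #{e | x e ≠ 0} ≤ 8 * Fintype.card G.V := by
    calc 2 * ∑ x ∈ B, #{e | x e ≠ 0} = ∑ v, ∑ x ∈ B, G.supportDegree x v := by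
          rw [mul_sum, sum_comm]; simp only [sum_supportDegree]
      _ ≤ ∑ _v : G.V, 8 := sum_le_sum fun v _ => hvertex v
      _ = 8 * Fintype.card G.V := by simp [mul_comm]
  omega

end SupportDegree

section CycleSpaceDimension

variable (G)

def incMatrix : Matrix G.V G.E (ZMod 2) := Matrix.of G.inc

lemma cycleSpace_eq_ker : G.cycleSpace = LinearMap.ker G.incMatrix.mulVecLin := by
  ext x
  simp [cycleSpace, incMatrix, Matrix.mulVec, dotProduct, funext_iff]

lemma sum_mulVec_incMatrix (x : G.E → ZMod 2) : ∑ v, G.incMatrix.mulVec x v = 0 := by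
  have hcol : ∀ e, ∑ v, G.inc v e = 0 := fun e => by
    simp only [inc_eq_incCount]
    rw [← Nat.cast_sum, sum_incCount]
    rfl
  simp only [Matrix.mulVec, dotProduct, incMatrix, Matrix.of_apply]
  rw [sum_comm]
  simp [← sum_mul, hcol]

/-- The incidence map misses every vector with odd coordinate sum, so its rank is below `|V|`;
rank–nullity then gives `dim Z(G) ≥ |E| - |V| + 1`. -/
lemma card_lt_finrank_cycleSpace_add_card [Nonempty G.V] :
    Fintype.card G.E < finrank (ZMod 2) G.cycleSpace + Fintype.card G.V := by
  obtain ⟨v₀⟩ := ‹Nonempty G.V›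
  have hrange : LinearMap.range G.incMatrix.mulVecLin ≠ ⊤ := by
    intro htop
    obtain ⟨x, hx⟩ := (LinearMap.range_eq_top.mp htop) (Pi.single v₀ 1)
    have := G.sum_mulVec_incMatrix x
    rw [← Matrix.mulVecLin_apply, hx] at this
    simp at this
  have hrank := LinearMap.finrank_range_add_finrank_ker G.incMatrix.mulVecLin
  have hlt := Submodule.finrank_lt hrange
  rw [← cycleSpace_eq_ker] at hrank
  simp only [finrank_pi] at hrank hlt
  omega

end CycleSpaceDimension

lemma IsCycleBasis.card_eq_finrank {B : Finset (G.E → ZMod 2)} (hB : G.IsCycleBasis B) :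
    #B = finrank (ZMod 2) G.cycleSpace := by
  rw [← hB.2.2]
  exact (finrank_span_finset_eq_card hB.2.1).symm

lemma IsCycleBasis.ne_zero {B : Finset (G.E → ZMod 2)} (hB : G.IsCycleBasis B)
    {x : G.E → ZMod 2} (hx : x ∈ B) : x ≠ 0 := by
  simpa using hB.2.1.ne_zero ⟨x, hx⟩

section CycleExtraction

variable {n : ℕ} {vs : Fin (n + 1) → G.V} {es : Fin n → G.E}

lemma isPathOn_iff : G.IsPathOn n vs es ↔
    Function.Injective vs ∧ ∀ i, G.Joins (es i) (vs i.castSucc) (vs i.succ) := Iff.rfl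

lemma IsPathOn.joins (hp : G.IsPathOn n vs es) (i : Fin n) :
    G.Joins (es i) (vs i.castSucc) (vs i.succ) := hp.2 i

lemma isPathOn_edge (hloop : G.fst e ≠ G.snd e) : G.IsPathOn 1 ![G.fst e, G.snd e] ![e] := by
  refine ⟨fun i j h => ?_, fun i => ?_⟩
  · fin_cases i <;> fin_cases j <;> simp_all [eq_comm]
  · fin_cases i
    exact .inl ⟨rfl, rfl⟩

lemma IsPathOn.injective_edges (hp : G.IsPathOn n vs es) : Function.Injective es := by
  intro a b hab
  have ha := hp.joins a
  have hb := hp.joins b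
  rw [hab] at ha
  have h1 := (ha.eq_or_eq hb).imp (@hp.1 _ _) (@hp.1 _ _)
  have h2 := (ha.eq_or_eq hb.symm).imp (@hp.1 _ _) (@hp.1 _ _)
  simp only [Fin.ext_iff, Fin.val_castSucc, Fin.val_succ] at h1 h2
  exact Fin.ext (by omega)

lemma IsPathOn.cons (hp : G.IsPathOn n vs es) (hw : w ∉ Set.range vs)
    (hf : G.Joins f w (vs 0)) :
    G.IsPathOn (n + 1) (Fin.cons w vs) (Fin.cons f es) :=
  isPathOn_iff.mpr ⟨Fin.cons_injective_iff.mpr ⟨hw, hp.1⟩, Fin.cases (by simpa using hf)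
    fun i => by simpa [← Fin.succ_castSucc] using hp.joins i⟩

lemma IsPathOn.exists_isCycleOn_of_joins (hp : G.IsPathOn n vs es) (j : Fin (n + 1))
    (hf : G.Joins f (vs j) (vs 0)) (hfes : ∀ i, f ≠ es i) :
    ∃ (m : ℕ) (cvs : Fin m → G.V) (ces : Fin m → G.E), 1 ≤ m ∧ G.IsCycleOn m cvs ces ∧
      ∀ i, ces i = f ∨ ∃ k, ces i = es k := by
  have hjn : (j : ℕ) ≤ n := Nat.lt_succ_iff.mp j.isLt
  let ces : Fin (j + 1) → G.E := Fin.lastCases f fun i => es (Fin.castLE hjn i)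
  refine ⟨j + 1, fun i => vs (Fin.castLE j.isLt i), ces, by omega, ⟨?_, ?_, ?_⟩, ?_⟩
  · exact hp.1.comp (Fin.castLE_injective _)
  · intro a b hab
    induction a using Fin.lastCases <;> induction b using Fin.lastCases <;>
      simp only [ces, Fin.lastCases_last, Fin.lastCases_castSucc] at hab
    · rfl
    · exact absurd hab (hfes _)
    · exact absurd hab.symm (hfes _)
    · rw [Fin.castLE_injective _ (hp.injective_edges hab)]
  · intro i
    induction i using Fin.lastCases with
    | last =>
      show G.Joins (ces (Fin.last j)) _ _
      simp only [ces, Fin.lastCases_last, finRotate_last]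
      convert hf using 2 <;> rfl
    | cast k =>
      have hrot : finRotate (j + 1) k.castSucc = k.succ :=
        Fin.ext (coe_finRotate_of_ne_last (Fin.castSucc_lt_last k).ne)
      simp only [ces, Fin.lastCases_castSucc, hrot]
      exact hp.joins (Fin.castLE hjn k)
  · intro i
    induction i using Fin.lastCases <;> simp [ces]

lemma exists_joins_ne_of_mem_cycleSpace (hloop : ∀ e, G.fst e ≠ G.snd e)
    {x : G.E → ZMod 2} (hx : x ∈ G.cycleSpace) (he : x e ≠ 0) (hjoins : G.Joins e u w) :
    ∃ f w', f ≠ e ∧ x f ≠ 0 ∧ G.Joins f u w' := by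
  by_contra! hnone
  have hsingle : G.supportDegree x u = 1 := by
    rw [supportDegree, sum_eq_single_of_mem e (by simpa using he) fun f hf hfe => ?_]
    · exact hjoins.incCount_eq_one (hloop e)
    · by_contra hne
      obtain ⟨w', hw'⟩ := exists_joins_of_incCount_ne_zero hne
      exact hnone f w' hfe (by simpa using hf) hw'
  have heven := even_supportDegree hx u
  rw [hsingle] at heven
  exact Nat.not_even_one heven

/-- A second support edge at the start of the path either returns to the path, closing a cycle,
or leaves it, giving a longer path. -/
lemma IsPathOn.exists_isCycleOn_or_exists_isPathOn_succ (hloop : ∀ e, G.fst e ≠ G.snd e)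
    {x : G.E → ZMod 2} (hx : x ∈ G.cycleSpace) {vs : Fin (n + 2) → G.V} {es : Fin (n + 1) → G.E}
    (hp : G.IsPathOn (n + 1) vs es) (hs : ∀ i, x (es i) ≠ 0) :
    (∃ (m : ℕ) (cvs : Fin m → G.V) (ces : Fin m → G.E),
        1 ≤ m ∧ G.IsCycleOn m cvs ces ∧ ∀ i, x (ces i) ≠ 0) ∨
      ∃ (vs' : Fin (n + 3) → G.V) (es' : Fin (n + 2) → G.E),
        G.IsPathOn (n + 2) vs' es' ∧ ∀ i, x (es' i) ≠ 0 := by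
  obtain ⟨f, w, hfe, hfx, hf⟩ :=
    exists_joins_ne_of_mem_cycleSpace hloop hx (hs 0) (hp.joins 0)
  rw [Fin.castSucc_zero] at hf
  have hfes : ∀ i, f ≠ es i := by
    rintro i rfl
    rcases (hp.joins i).eq_or_eq hf with h | h
    · exact hfe (congrArg es (Fin.castSucc_eq_zero_iff.mp (hp.1 h).symm))
    · exact Fin.succ_ne_zero i (hp.1 h).symm
  by_cases hw : w ∈ Set.range vs
  · obtain ⟨j, rfl⟩ := hw
    obtain ⟨m, cvs, ces, hm, hc, hces⟩ := hp.exists_isCycleOn_of_joins j hf.symm hfes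
    refine .inl ⟨m, cvs, ces, hm, hc, fun i => ?_⟩
    rcases hces i with h | ⟨k, h⟩ <;> rw [h]
    exacts [hfx, hs k]
  · exact .inr ⟨_, _, hp.cons hw hf.symm, Fin.cases hfx hs⟩

/-- If no cycle lies in the support, the previous lemma yields support paths of every length,
which a finite vertex set forbids. -/
theorem exists_isCycleOn_of_mem_cycleSpace (hloop : ∀ e, G.fst e ≠ G.snd e)
    {x : G.E → ZMod 2} (hx : x ∈ G.cycleSpace) (hx0 : x ≠ 0) :
    ∃ (m : ℕ) (vs : Fin m → G.V) (es : Fin m → G.E),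
      1 ≤ m ∧ G.IsCycleOn m vs es ∧ ∀ i, x (es i) ≠ 0 := by
  by_contra hno
  have hpath : ∀ n, ∃ (vs : Fin (n + 2) → G.V) (es : Fin (n + 1) → G.E),
      G.IsPathOn (n + 1) vs es ∧ ∀ i, x (es i) ≠ 0 := by
    intro n
    induction n with
    | zero =>
      obtain ⟨e, he⟩ := Function.ne_iff.mp hx0
      exact ⟨_, _, isPathOn_edge (hloop e), fun i => by fin_cases i; exact he⟩
    | succ n ih =>
      obtain ⟨vs, es, hp, hs⟩ := ih
      exact (hp.exists_isCycleOn_or_exists_isPathOn_succ hloop hx hs).resolve_left hno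
  obtain ⟨vs, _, hp, _⟩ := hpath (Fintype.card G.V)
  simpa using Fintype.card_le_of_injective vs hp.1

lemma IsCycleOn.le_card_support {m : ℕ} {vs : Fin m → G.V} {es : Fin m → G.E}
    (hc : G.IsCycleOn m vs es) {x : G.E → ZMod 2} (hs : ∀ i, x (es i) ≠ 0) :
    m ≤ #{e | x e ≠ 0} := by
  simpa using card_le_card_of_injOn (s := univ) (t := {e | x e ≠ 0}) es
    (fun i _ => by simpa using hs i) hc.2.1.injOn

end CycleExtraction

end Multigraph

open Finset Multigraph in
/-- If a (nonempty) 3-regular graph `G` has a 3-basis of its cycle space,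
then `G` has girth at most 7, i.e. it contains a cycle of length at most 7. -/
theorem girth_le_seven_of_cubic_threeBasis (G : Multigraph) (hne : Nonempty G.V)
    (hreg : ∀ v : G.V, G.degree v = 3)
    (B : Finset (G.E → ZMod 2)) (hB : G.IsKBasis 3 B) :
    ∃ (n : ℕ) (vs : Fin n → G.V) (es : Fin n → G.E),
      1 ≤ n ∧ n ≤ 7 ∧ G.IsCycleOn n vs es := by
  by_contra! hgirth
  have hloop : ∀ e, G.fst e ≠ G.snd e := fun e h =>
    hgirth 1 _ _ le_rfl (by norm_num) (G.isCycleOn_loop e h)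
  obtain ⟨hbasis, hcharge⟩ := hB
  have hlong : ∀ x ∈ B, 8 ≤ #{e | x e ≠ 0} := by
    intro x hxB
    obtain ⟨m, vs, es, hm, hc, hs⟩ :=
      exists_isCycleOn_of_mem_cycleSpace hloop (hbasis.1 x hxB) (hbasis.ne_zero hxB)
    have hmx := hc.le_card_support hs
    by_contra! hshort
    exact hgirth m vs es hm (by omega) hc
  have hcount := sum_card_support_le_of_cubic hbasis.1 hcharge hreg
  have hlower : #B * 8 ≤ ∑ x ∈ B, #{e | x e ≠ 0} := card_nsmul_le_sum B _ 8 hlong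
  have hdim := G.card_lt_finrank_cycleSpace_add_card
  rw [← hbasis.card_eq_finrank] at hdim
  have hhandshake := G.sum_degree
  simp only [hreg, sum_const, card_univ, smul_eq_mul] at hhandshake
  omega
end
end
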